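/- arXiv:0804.0638 — 4 statements merged into one kernel-verified Lean document; each statement's English description precedes it below -/
import Mathlib

section
/- Let D be a dialgebra over a field k. Define a bilinear bracket on D by [a,b] := a ⊣ b − b ⊢ a. Then this bracket satisfies the Leibniz identity: [[a,b],c] = [[a,c],b] + [a,[b,c]] for all a, b, c ∈ D; that is, D with this bracket is a Leibniz algebra. -/
universe u v

/-- A dialgebra over a field `k`: a `k`-vector space with two bilinear associative
products `lp` (written `⊢` in the paper) and `rp` (written `⊣`) satisfying the three
dialgebra axioms. -/
class Dialgebra (k : Type*) (D : Type*) [Field k] [AddCommGroup D] [Module k D] where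
  lp : D → D → D
  rp : D → D → D
  lp_add_left : ∀ a b c : D, lp (a + b) c = lp a c + lp b c
  lp_add_right : ∀ a b c : D, lp a (b + c) = lp a b + lp a c
  lp_smul_left : ∀ (r : k) (a b : D), lp (r • a) b = r • lp a b
  lp_smul_right : ∀ (r : k) (a b : D), lp a (r • b) = r • lp a b
  rp_add_left : ∀ a b c : D, rp (a + b) c = rp a c + rp b c
  rp_add_right : ∀ a b c : D, rp a (b + c) = rp a b + rp a c
  rp_smul_left : ∀ (r : k) (a b : D), rp (r • a) b = r • rp a b
  rp_smul_right : ∀ (r : k) (a b : D), rp a (r • b) = r • rp a b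
  lp_assoc : ∀ a b c : D, lp (lp a b) c = lp a (lp b c)
  rp_assoc : ∀ a b c : D, rp (rp a b) c = rp a (rp b c)
  di1 : ∀ a b c : D, rp a (lp b c) = rp (rp a b) c
  di2 : ∀ a b c : D, lp (rp a b) c = lp a (lp b c)
  di3 : ∀ a b c : D, lp a (rp b c) = rp (lp a b) c

/-- A Leibniz algebra over a field `k`: a `k`-vector space with a bilinear bracket
satisfying the Leibniz identity `[[a,b],c] = [[a,c],b] + [a,[b,c]]`. -/
class LeibnizAlgebra (k : Type*) (L : Type*) [Field k] [AddCommGroup L] [Module k L] where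
  br : L → L → L
  br_add_left : ∀ a b c : L, br (a + b) c = br a c + br b c
  br_add_right : ∀ a b c : L, br a (b + c) = br a b + br a c
  br_smul_left : ∀ (r : k) (a b : L), br (r • a) b = r • br a b
  br_smul_right : ∀ (r : k) (a b : L), br a (r • b) = r • br a b
  leibniz : ∀ a b c : L, br (br a b) c = br (br a c) b + br a (br b c)

/-- In any dialgebra `D` over a field `k`, the bracket
`[a,b] = a ⊣ b − b ⊢ a` satisfies the Leibniz identity, i.e. `D` with this bracket
is a Leibniz algebra. -/
theorem dialgebra_bracket_is_leibniz {k D : Type*} [Field k] [AddCommGroup D]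
    [Module k D] [dia : Dialgebra k D] (br : D → D → D)
    (hbr : ∀ a b : D, br a b = dia.rp a b - dia.lp b a) :
    ∀ a b c : D, br (br a b) c = br (br a c) b + br a (br b c) := by
  intro a b c
  have lp_sub_left : ∀ a b c : D, dia.lp (a - b) c = dia.lp a c - dia.lp b c := by
    intro a b c
    rw [sub_eq_add_neg, dia.lp_add_left, ← neg_one_smul k b, dia.lp_smul_left,
      neg_one_smul, sub_eq_add_neg]
  have lp_sub_right : ∀ a b c : D, dia.lp a (b - c) = dia.lp a b - dia.lp a c := by
    intro a b c
    rw [sub_eq_add_neg, dia.lp_add_right, ← neg_one_smul k c, dia.lp_smul_right,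
      neg_one_smul, sub_eq_add_neg]
  have rp_sub_left : ∀ a b c : D, dia.rp (a - b) c = dia.rp a c - dia.rp b c := by
    intro a b c
    rw [sub_eq_add_neg, dia.rp_add_left, ← neg_one_smul k b, dia.rp_smul_left,
      neg_one_smul, sub_eq_add_neg]
  have rp_sub_right : ∀ a b c : D, dia.rp a (b - c) = dia.rp a b - dia.rp a c := by
    intro a b c
    rw [sub_eq_add_neg, dia.rp_add_right, ← neg_one_smul k c, dia.rp_smul_right,
      neg_one_smul, sub_eq_add_neg]
  simp only [hbr, lp_sub_left, lp_sub_right, rp_sub_left, rp_sub_right,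
    dia.rp_assoc, dia.lp_assoc, dia.di1, dia.di2, dia.di3]
  abel
end

section
/- Let D be a dialgebra over a field k. Consider binary trees whose leaves are labeled (in left-to-right order) by elements b₁, …, bₙ of D and whose internal nodes are labeled by ⊢ or ⊣; let eval(t) ∈ D be the evaluation of such a tree t, and define the center index c(t) ∈ {1, …, n} recursively by: c(leaf) = 1, c(t₁ ⊣ t₂) = c(t₁), and c(t₁ ⊢ t₂) = (number of leaves of t₁) + c(t₂). Then for every such tree t with leaf sequence b₁, …, bₙ and c = c(t), eval(t) = b₁ ⊢ ⋯ ⊢ b_{c−1} ⊢ b_c ⊣ b_{c+1} ⊣ ⋯ ⊣ bₙ (evaluated, say, with the bracketing ((b₁ ⊢ (b₂ ⊢ (⋯ ⊢ b_c))) ⊣ b_{c+1}) ⊣ ⋯ ⊣ bₙ). In particular, the value of a tree depends only on its leaf sequence and its center index, so any bracketing of b₁ ⊢ ⋯ ⊢ b_c ⊣ ⋯ ⊣ bₙ gives the same result. -/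
universe u v

/-- A binary tree with leaves labelled by elements of `D` and internal nodes
labelled by `⊢` (`lnode`) or `⊣` (`rnode`). -/
inductive DiTree (D : Type*) where
  | leaf : D → DiTree D
  | lnode : DiTree D → DiTree D → DiTree D
  | rnode : DiTree D → DiTree D → DiTree D

namespace DiTree

variable {D : Type*}

/-- Evaluation of a tree using the two products. -/
def eval (lp rp : D → D → D) : DiTree D → D
  | leaf d => d
  | lnode t1 t2 => lp (t1.eval lp rp) (t2.eval lp rp)
  | rnode t1 t2 => rp (t1.eval lp rp) (t2.eval lp rp)

/-- The leaf sequence of a tree, in left-to-right order. -/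
def leaves : DiTree D → List D
  | leaf d => [d]
  | lnode t1 t2 => t1.leaves ++ t2.leaves
  | rnode t1 t2 => t1.leaves ++ t2.leaves

/-- The (1-based) center index of a tree: `c(leaf) = 1`, `c(t₁ ⊣ t₂) = c(t₁)`,
`c(t₁ ⊢ t₂) = (number of leaves of t₁) + c(t₂)`. -/
def centerIdx : DiTree D → ℕ
  | leaf _ => 1
  | lnode t1 t2 => t1.leaves.length + t2.centerIdx
  | rnode t1 _ => t1.centerIdx

end DiTree

section Aux

lemma ditree_exists_decomp {D : Type*} (t : DiTree D) :
    ∃ p m q, t.leaves = p ++ m :: q ∧ p.length + 1 = t.centerIdx := by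
  induction t with
  | leaf d => exact ⟨[], d, [], rfl, rfl⟩
  | lnode t1 t2 ih1 ih2 =>
    obtain ⟨p, m, q, h1, h2⟩ := ih2
    refine ⟨t1.leaves ++ p, m, q, ?_, ?_⟩
    · simp [DiTree.leaves, h1]
    · simp [DiTree.centerIdx, ← h2]; omega
  | rnode t1 t2 ih1 ih2 =>
    obtain ⟨p, m, q, h1, h2⟩ := ih1
    exact ⟨p, m, q ++ t2.leaves, by simp [DiTree.leaves, h1], h2⟩

variable {k D : Type*} [Field k] [AddCommGroup D] [Module k D] [dia : Dialgebra k D]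

/-- di3: `a ⊢ (b ⊣ ⋯)` pushes through a right fold of `⊣`. -/
lemma lp_foldl_rp (a : D) (post : List D) :
    ∀ b : D, dia.lp a (List.foldl dia.rp b post) = List.foldl dia.rp (dia.lp a b) post := by
  induction post with
  | nil => intro b; rfl
  | cons h t ih =>
    intro b
    simp only [List.foldl_cons, ih, ← Dialgebra.di3]

/-- lp associativity on folds. -/
lemma lp_foldr_lp (m c : D) (p : List D) :
    dia.lp (List.foldr dia.lp m p) c = List.foldr dia.lp (dia.lp m c) p := by
  induction p with
  | nil => rfl
  | cons h t ih => simp only [List.foldr_cons, Dialgebra.lp_assoc, ih]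

/-- di2 on folds. -/
lemma lp_foldl_rp_left (c : D) (q : List D) :
    ∀ u : D, dia.lp (List.foldl dia.rp u q) c = dia.lp u (List.foldr dia.lp c q) := by
  induction q with
  | nil => intro u; rfl
  | cons h t ih =>
    intro u
    simp only [List.foldl_cons, List.foldr_cons, ih, Dialgebra.di2]

/-- rp associativity on folds. -/
lemma rp_foldl_rp (a : D) (q : List D) :
    ∀ b : D, dia.rp a (List.foldl dia.rp b q) = List.foldl dia.rp (dia.rp a b) q := by
  induction q with
  | nil => intro b; rfl
  | cons h t ih =>
    intro b
    simp only [List.foldl_cons, ih, Dialgebra.rp_assoc]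

/-- di1 on folds. -/
lemma rp_foldr_lp (m : D) (p : List D) :
    ∀ a : D, dia.rp a (List.foldr dia.lp m p) = dia.rp (List.foldl dia.rp a p) m := by
  induction p with
  | nil => intro a; rfl
  | cons h t ih =>
    intro a
    simp only [List.foldr_cons, List.foldl_cons, Dialgebra.di1, ih]

lemma foldr_lp_foldl_rp (l post : List D) (b : D) :
    List.foldr dia.lp (List.foldl dia.rp b post) l
      = List.foldl dia.rp (List.foldr dia.lp b l) post := by
  induction l with
  | nil => rfl
  | cons h t ih => simp only [List.foldr_cons, ih, lp_foldl_rp]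

end Aux

/-- in a dialgebra, the value of any diword (tree) depends only on its
leaf sequence and its center index: it equals the normalized evaluation
`((b₁ ⊢ (b₂ ⊢ (⋯ ⊢ b_c))) ⊣ b_{c+1}) ⊣ ⋯ ⊣ bₙ`. -/
theorem ditree_eval_eq_normal_form {k D : Type*} [Field k] [AddCommGroup D]
    [Module k D] [dia : Dialgebra k D] (t : DiTree D)
    (pre : List D) (mid : D) (post : List D)
    (hleaves : t.leaves = pre ++ mid :: post)
    (hcenter : pre.length + 1 = t.centerIdx) :
    t.eval dia.lp dia.rp = List.foldl dia.rp (List.foldr dia.lp mid pre) post := by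
  induction t generalizing pre mid post with
  | leaf d =>
    simp only [DiTree.centerIdx] at hcenter
    have hpre : pre = [] := List.eq_nil_of_length_eq_zero (by omega)
    subst hpre
    simp only [DiTree.leaves, List.nil_append] at hleaves
    obtain ⟨hm, hp⟩ : d = mid ∧ [] = post := by
      simpa using hleaves
    subst hm; subst hp
    rfl
  | lnode t1 t2 ih1 ih2 =>
    obtain ⟨p1, m1, q1, hd1, hc1⟩ := ditree_exists_decomp t1
    obtain ⟨p2, m2, q2, hd2, hc2⟩ := ditree_exists_decomp t2
    simp only [DiTree.leaves, DiTree.centerIdx] at hleaves hcenter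
    -- t1.leaves is a prefix of pre
    have hxx := hleaves
    rw [List.append_eq_append_iff] at hxx
    have hlen : t1.leaves.length ≤ pre.length := by omega
    obtain ⟨pre', hpre, hl2⟩ : ∃ pre', pre = t1.leaves ++ pre' ∧
        t2.leaves = pre' ++ mid :: post := by
      rcases hxx with ⟨a', h1, h2⟩ | ⟨c', h1, h2⟩
      · exact ⟨a', h1, h2⟩
      · have : c'.length = 0 := by
          have := congrArg List.length h1
          simp at this; omega
        have hc' : c' = [] := List.eq_nil_of_length_eq_zero this
        subst hc'
        refine ⟨[], by simpa using h1.symm, by simpa using h2.symm⟩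
    have hpre'len : pre'.length + 1 = t2.centerIdx := by
      have := congrArg List.length hpre
      simp at this; omega
    have e1 := ih1 p1 m1 q1 hd1 hc1
    have e2 := ih2 pre' mid post hl2 hpre'len
    show dia.lp (t1.eval dia.lp dia.rp) (t2.eval dia.lp dia.rp) = _
    rw [e1, e2, lp_foldl_rp_left, lp_foldr_lp]
    have : dia.lp m1 (List.foldr dia.lp (List.foldl dia.rp (List.foldr dia.lp mid pre') post) q1)
        = List.foldr dia.lp (List.foldl dia.rp (List.foldr dia.lp mid pre') post) (m1 :: q1) := rfl
    rw [this, ← List.foldr_append, ← hd1, foldr_lp_foldl_rp, ← List.foldr_append, ← hpre]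
  | rnode t1 t2 ih1 ih2 =>
    obtain ⟨p2, m2, q2, hd2, hc2⟩ := ditree_exists_decomp t2
    simp only [DiTree.leaves, DiTree.centerIdx] at hleaves hcenter
    have hc1le : t1.centerIdx ≤ t1.leaves.length := by
      obtain ⟨p, m, q, h1, h2⟩ := ditree_exists_decomp t1
      have := congrArg List.length h1
      simp at this; omega
    have hxx := hleaves
    rw [List.append_eq_append_iff] at hxx
    obtain ⟨q', hl1, hpost⟩ : ∃ q', t1.leaves = pre ++ mid :: q' ∧
        post = q' ++ t2.leaves := by
      rcases hxx with ⟨a', h1, h2⟩ | ⟨c', h1, h2⟩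
      · have := congrArg List.length h1
        simp at this; omega
      · match c', h2 with
        | [], h2 =>
          have := congrArg List.length h1
          simp at this; omega
        | x :: c'', h2 =>
          obtain ⟨hx, hp⟩ : mid = x ∧ post = c'' ++ t2.leaves := by
            simpa using h2
          exact ⟨c'', by rw [h1, hx], hp⟩
    have e1 := ih1 pre mid q' hl1 (by omega)
    have e2 := ih2 p2 m2 q2 hd2 hc2
    show dia.rp (t1.eval dia.lp dia.rp) (t2.eval dia.lp dia.rp) = _
    rw [e1, e2, rp_foldl_rp, rp_foldr_lp, hpost, hd2]
    simp [List.foldl_append]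
end

section
/- Let X be a set and k a field. The free k-vector space on the set [X*] of normal diwords over X, equipped with the bilinear products determined on basis elements by: [u] ⊢ [v] = the concatenation uv with center at the center of v, and [u] ⊣ [v] = the concatenation uv with center at the center of u, is a dialgebra: both products are associative and satisfy a ⊣ (b ⊢ c) = (a ⊣ b) ⊣ c, (a ⊣ b) ⊢ c = a ⊢ (b ⊢ c), and a ⊢ (b ⊣ c) = (a ⊢ b) ⊣ c. -/
universe u v

/-- A normal diword over `X`: a nonempty word in `X` together with a marked letter
(its center), recorded as the letters to the left of the center, the center, and the
letters to the right of the center. -/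
structure NDiword (X : Type*) where
  left : List X
  center : X
  right : List X

namespace NDiword

variable {X : Type*}

/-- The underlying (associative) word of a normal diword. -/
def word (u : NDiword X) : List X := u.left ++ u.center :: u.right

/-- Concatenation with center at the center of the second factor: the product `⊢`
on normal diwords. -/
def lconc (u v : NDiword X) : NDiword X := ⟨u.word ++ v.left, v.center, v.right⟩

/-- Concatenation with center at the center of the first factor: the product `⊣`
on normal diwords. -/
def rconc (u v : NDiword X) : NDiword X := ⟨u.left, u.center, u.right ++ v.word⟩

/-- The deg-lex order on normal diwords: compare `wt([u]) = (n+m+1, m, x₋ₘ, …, xₙ)`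
lexicographically. -/
def dlt [LinearOrder X] (u v : NDiword X) : Prop :=
  u.word.length < v.word.length ∨
    (u.word.length = v.word.length ∧
      (u.left.length < v.left.length ∨
        (u.left.length = v.left.length ∧ List.Lex (· < ·) u.word v.word)))

end NDiword

/-- The free dialgebra on `X` over `k`: the free `k`-vector space on the set of
normal diwords over `X`. -/
abbrev FreeDialg (k : Type*) [Field k] (X : Type*) := NDiword X →₀ k

/-- The one-letter normal diword `ẋ`, as an element of the free dialgebra. -/
noncomputable def ofX (k : Type*) [Field k] {X : Type*} (x : X) : FreeDialg k X :=
  Finsupp.single ⟨[], x, []⟩ 1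

section FreeDialgebra

variable {k : Type*} [Field k] {X : Type*}

/-- The product `⊢` on the free dialgebra, extended bilinearly from normal diwords. -/
noncomputable def lmul (f g : FreeDialg k X) : FreeDialg k X :=
  f.sum fun u a => g.sum fun v b => Finsupp.single (u.lconc v) (a * b)

/-- The product `⊣` on the free dialgebra, extended bilinearly from normal diwords. -/
noncomputable def rmul (f g : FreeDialg k X) : FreeDialg k X :=
  f.sum fun u a => g.sum fun v b => Finsupp.single (u.rconc v) (a * b)

/-- `x₁ ⊢ (x₂ ⊢ (⋯ ⊢ t))` for a word `a = x₁x₂⋯` of letters. -/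
noncomputable def lfold (a : List X) (t : FreeDialg k X) : FreeDialg k X :=
  a.foldr (fun x s => lmul (ofX k x) s) t

/-- `((t ⊣ x₁) ⊣ x₂) ⊣ ⋯` for a word `b = x₁x₂⋯` of letters. -/
noncomputable def rfold (t : FreeDialg k X) (b : List X) : FreeDialg k X :=
  b.foldl (fun s x => rmul s (ofX k x)) t

/-- `f` is left normed: every normal diword in its support has its center at the
last letter. -/
def LeftNormed (f : FreeDialg k X) : Prop := ∀ u ∈ f.support, u.right = ([] : List X)

/-- `f` is right normed: every normal diword in its support has its center at the
first letter. -/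
def RightNormed (f : FreeDialg k X) : Prop := ∀ u ∈ f.support, u.left = ([] : List X)

/-- `u` is the leading term (maximal term in the deg-lex order) of `f`. -/
def IsMaxTerm [LinearOrder X] (f : FreeDialg k X) (u : NDiword X) : Prop :=
  u ∈ f.support ∧ ∀ v ∈ f.support, v ≠ u → v.dlt u

/-- `f` is monic: its leading coefficient is `1`. -/
def Monic [LinearOrder X] (f : FreeDialg k X) : Prop :=
  ∃ u, IsMaxTerm f u ∧ f u = 1

/-- A context for an `s`-diword `[asb]`: a normal diword with one letter `x_k`
removed, where `s` is to be substituted.  `center a b` is the case `k = 0` (so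
`[asb] = a ⊢ ⋯ ⊢ s ⊣ ⋯ ⊣ b`); `left a w` is the case `k < 0` (so
`[asb] = a ⊢ ⋯ ⊢ s ⊢ [w]` with the center inside `w`); `right w b` is the case
`k > 0` (so `[asb] = [w] ⊣ s ⊣ ⋯ ⊣ b` with the center inside `w`). -/
inductive Ctx (X : Type*) where
  | center (a b : List X)
  | left (a : List X) (w : NDiword X)
  | right (w : NDiword X) (b : List X)

/-- The `s`-diword `[asb]` determined by a context: substitute `s` into the context. -/
noncomputable def Ctx.eval (s : FreeDialg k X) : Ctx X → FreeDialg k X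
  | Ctx.center a b => rfold (lfold a s) b
  | Ctx.left a w => lfold a (lmul s (Finsupp.single w 1))
  | Ctx.right w b => rfold (rmul (Finsupp.single w 1) s) b

/-- Substituting a normal diword `t` into a context gives a normal diword `[atb]`. -/
def Ctx.subst {X : Type*} (t : NDiword X) : Ctx X → NDiword X
  | Ctx.center a b => ⟨a ++ t.left, t.center, t.right ++ b⟩
  | Ctx.left a w => ⟨a ++ t.word ++ w.left, w.center, w.right⟩
  | Ctx.right w b => ⟨w.left, w.center, w.right ++ t.word ++ b⟩

/-- `[asb]` is a normal `s`-diword: either `s` sits at the center (`k = 0`), or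
`k < 0` and `s` is left normed, or `k > 0` and `s` is right normed. -/
def IsNormalFor (s : FreeDialg k X) : Ctx X → Prop
  | Ctx.center _ _ => True
  | Ctx.left _ _ => LeftNormed s
  | Ctx.right _ _ => RightNormed s

/-- Membership in the two-sided dialgebra ideal generated by `S`. -/
inductive IdealGen (S : Set (FreeDialg k X)) : FreeDialg k X → Prop
  | of {s : FreeDialg k X} : s ∈ S → IdealGen S s
  | zero : IdealGen S 0
  | add {f g : FreeDialg k X} : IdealGen S f → IdealGen S g → IdealGen S (f + g)
  | smul (r : k) {f : FreeDialg k X} : IdealGen S f → IdealGen S (r • f)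
  | lmul_left (g : FreeDialg k X) {f : FreeDialg k X} : IdealGen S f → IdealGen S (lmul g f)
  | lmul_right (g : FreeDialg k X) {f : FreeDialg k X} : IdealGen S f → IdealGen S (lmul f g)
  | rmul_left (g : FreeDialg k X) {f : FreeDialg k X} : IdealGen S f → IdealGen S (rmul g f)
  | rmul_right (g : FreeDialg k X) {f : FreeDialg k X} : IdealGen S f → IdealGen S (rmul f g)

/-- The two-sided dialgebra ideal `Id(S)` generated by `S`, as a submodule. -/
def dialgIdeal (S : Set (FreeDialg k X)) : Submodule k (FreeDialg k X) where
  carrier := {f | IdealGen S f}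
  add_mem' := fun hf hg => IdealGen.add hf hg
  zero_mem' := IdealGen.zero
  smul_mem' := fun r _ hf => IdealGen.smul r hf

end FreeDialgebra

section GSB

variable {k : Type*} [Field k] {X : Type*}

/-- `h` is a linear combination `Σᵢ αᵢ [aᵢsᵢbᵢ]` of `sᵢ`-diwords with `sᵢ ∈ S`, where
each pair `(sᵢ, [aᵢ⋅bᵢ])` satisfies the property `P`. -/
def IsCombination (S : Set (FreeDialg k X)) (h : FreeDialg k X)
    (P : FreeDialg k X → Ctx X → Prop) : Prop :=
  ∃ (n : ℕ) (α : Fin n → k) (s : Fin n → FreeDialg k X) (c : Fin n → Ctx X),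
    (∀ i, s i ∈ S) ∧ (∀ i, P (s i) (c i)) ∧
    h = ∑ i, α i • (c i).eval (s i)

/-- The composition of left multiplication `x ⊣ f` is trivial modulo `S`. -/
def TrivLMul [LinearOrder X] (S : Set (FreeDialg k X)) (x : X) (f : FreeDialg k X) : Prop :=
  IsCombination S (rmul (ofX k x) f) fun s c =>
    IsNormalFor s c ∧ RightNormed s ∧ RightNormed (c.eval s) ∧
      ∀ u m, IsMaxTerm s u → IsMaxTerm (rmul (ofX k x) f) m →
        (c.subst u).word.length ≤ m.word.length

/-- The composition of right multiplication `f ⊢ x` is trivial modulo `S`. -/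
def TrivRMul [LinearOrder X] (S : Set (FreeDialg k X)) (x : X) (f : FreeDialg k X) : Prop :=
  IsCombination S (lmul f (ofX k x)) fun s c =>
    IsNormalFor s c ∧ LeftNormed s ∧ LeftNormed (c.eval s) ∧
      ∀ u m, IsMaxTerm s u → IsMaxTerm (lmul f (ofX k x)) m →
        (c.subst u).word.length ≤ m.word.length

/-- All compositions of left multiplication in `S` are trivial modulo `S`. -/
def LMulCompsTrivial [LinearOrder X] (S : Set (FreeDialg k X)) : Prop :=
  ∀ f ∈ S, ¬ RightNormed f → ∀ x : X, TrivLMul S x f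

/-- All compositions of right multiplication in `S` are trivial modulo `S`. -/
def RMulCompsTrivial [LinearOrder X] (S : Set (FreeDialg k X)) : Prop :=
  ∀ f ∈ S, ¬ LeftNormed f → ∀ x : X, TrivRMul S x f

/-- `h` is trivial modulo `(S, [w])`: it is a combination of normal `S`-diwords with
leading normal diwords `< [w]`; moreover all the summands are right (resp. left)
normed `S`-diwords whenever the side condition `rn` (resp. `ln`) holds. -/
def TrivBelowWith [LinearOrder X] (S : Set (FreeDialg k X)) (h : FreeDialg k X)
    (w : NDiword X) (rn ln : Prop) : Prop :=
  IsCombination S h fun s c =>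
    IsNormalFor s c ∧ (∀ u, IsMaxTerm s u → (c.subst u).dlt w) ∧
      (rn → RightNormed s ∧ RightNormed (c.eval s)) ∧
      (ln → LeftNormed s ∧ LeftNormed (c.eval s))

/-- All compositions of inclusion among elements of `S` are trivial. -/
def InclCompsTrivial [LinearOrder X] (S : Set (FreeDialg k X)) : Prop :=
  ∀ f ∈ S, ∀ g ∈ S, ∀ (fb gb : NDiword X) (c : Ctx X),
    IsMaxTerm f fb → IsMaxTerm g gb → IsNormalFor g c → fb = c.subst gb →
      TrivBelowWith S (f - c.eval g) fb
        (RightNormed f ∧ RightNormed g ∧ RightNormed (c.eval g))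
        (LeftNormed f ∧ LeftNormed g ∧ LeftNormed (c.eval g))

/-- A context with no letters before the substituted polynomial (shape `[fb]`). -/
def Ctx.noLeft {X : Type*} : Ctx X → Prop
  | Ctx.center a _ => a = []
  | Ctx.left a _ => a = []
  | Ctx.right _ _ => False

/-- A context with no letters after the substituted polynomial (shape `[ag]`). -/
def Ctx.noRight {X : Type*} : Ctx X → Prop
  | Ctx.center _ b => b = []
  | Ctx.right _ b => b = []
  | Ctx.left _ _ => False

/-- All compositions of intersection among elements of `S` are trivial. -/
def IntersectCompsTrivial [LinearOrder X] (S : Set (FreeDialg k X)) : Prop :=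
  ∀ f ∈ S, ∀ g ∈ S, ∀ (fb gb : NDiword X) (cf cg : Ctx X),
    IsMaxTerm f fb → IsMaxTerm g gb → IsNormalFor f cf → IsNormalFor g cg →
    cf.noLeft → cg.noRight → cf.subst fb = cg.subst gb →
    (cf.subst fb).word.length < fb.word.length + gb.word.length →
      TrivBelowWith S (cf.eval f - cg.eval g) (cf.subst fb)
        (RightNormed f ∧ RightNormed g ∧ RightNormed (cf.eval f) ∧ RightNormed (cg.eval g))
        (LeftNormed f ∧ LeftNormed g ∧ LeftNormed (cf.eval f) ∧ LeftNormed (cg.eval g))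

/-- `S` is a Gröbner–Shirshov basis in the free dialgebra: `S` is monic and all
compositions (left multiplication, right multiplication, inclusion, intersection)
of elements of `S` are trivial. -/
def IsGSB [LinearOrder X] (S : Set (FreeDialg k X)) : Prop :=
  (∀ f ∈ S, Monic f) ∧ LMulCompsTrivial S ∧ RMulCompsTrivial S ∧
    InclCompsTrivial S ∧ IntersectCompsTrivial S

/-- `Irr(S)`: the normal diwords that are not of the form `[a[s̄]b]` for any `s ∈ S`
and normal `s`-diword `[asb]`. -/
def IrrSet [LinearOrder X] (S : Set (FreeDialg k X)) : Set (NDiword X) :=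
  {u | ¬ ∃ s ∈ S, ∃ (c : Ctx X) (sb : NDiword X),
    IsMaxTerm s sb ∧ IsNormalFor s c ∧ u = c.subst sb}

end GSB

/-! Both products are the bilinear extensions of operations on the basis `[X*]`. An identity
between two bracketings of such extensions holds as soon as it holds on basis triples, and on
normal diwords each of the five identities is associativity of concatenation, with the center
landing on the same letter on both sides. -/

namespace Finsupp

variable {G R : Type*}

/-- For the multiplication `μ` of a magma `G`, this is the product of the magma algebra `R[G]`. -/
noncomputable def convolution [Semiring R] (μ : G → G → G) (f g : G →₀ R) : G →₀ R :=
  f.sum fun u a => g.sum fun v b => single (μ u v) (a * b)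

section Semiring

variable [Semiring R] (μ : G → G → G)

theorem convolution_single_single (u v : G) (a b : R) :
    convolution μ (single u a) (single v b) = single (μ u v) (a * b) := by
  simp [convolution]

theorem add_convolution (f f' g : G →₀ R) :
    convolution μ (f + f') g = convolution μ f g + convolution μ f' g := by
  classical
  simp [-single_mul, convolution, sum_add_index, add_mul, sum_add]

theorem convolution_add (f g g' : G →₀ R) :
    convolution μ f (g + g') = convolution μ f g + convolution μ f g' := by
  classical
  simp [-single_mul, convolution, sum_add_index, mul_add, sum_add]

theorem smul_convolution (r : R) (f g : G →₀ R) :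
    convolution μ (r • f) g = r • convolution μ f g := by
  simp [-single_mul, convolution, sum_smul_index, smul_sum, mul_assoc]

theorem convolution_convolution {μ₁ μ₂ μ₃ μ₄ : G → G → G}
    (h : ∀ u v w, μ₁ (μ₂ u v) w = μ₃ u (μ₄ v w)) (f g e : G →₀ R) :
    convolution μ₁ (convolution μ₂ f g) e = convolution μ₃ f (convolution μ₄ g e) := by
  classical
  simp [-single_mul, convolution, sum_sum_index, mul_add, add_mul, mul_assoc, h]

end Semiring

theorem convolution_smul [CommSemiring R] (μ : G → G → G) (r : R) (f g : G →₀ R) :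
    convolution μ f (r • g) = r • convolution μ f g := by
  simp [-single_mul, convolution, sum_smul_index, smul_sum, mul_left_comm]

end Finsupp

namespace NDiword

variable {X : Type*} (u v w : NDiword X)

theorem lconc_assoc : (u.lconc v).lconc w = u.lconc (v.lconc w) := by
  simp [lconc, word]

theorem rconc_assoc : (u.rconc v).rconc w = u.rconc (v.rconc w) := by
  simp [rconc, word]

theorem rconc_rconc_eq_rconc_lconc : (u.rconc v).rconc w = u.rconc (v.lconc w) := by
  simp [lconc, rconc, word]

theorem rconc_lconc_eq_lconc_lconc : (u.rconc v).lconc w = u.lconc (v.lconc w) := by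
  simp [lconc, rconc, word]

theorem lconc_rconc_assoc : (u.lconc v).rconc w = u.lconc (v.rconc w) := by
  simp [lconc, rconc, word]

end NDiword

open Finsupp

theorem lmul_eq_convolution {k X : Type*} [Field k] :
    (lmul : FreeDialg k X → FreeDialg k X → FreeDialg k X) = convolution NDiword.lconc :=
  rfl

theorem rmul_eq_convolution {k X : Type*} [Field k] :
    (rmul : FreeDialg k X → FreeDialg k X → FreeDialg k X) = convolution NDiword.rconc :=
  rfl

/-- the free vector space on the normal diwords over `X`, with the
bilinear products determined on basis elements by `[u] ⊢ [v] = [u][v]` centered at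
the center of `v` and `[u] ⊣ [v] = [u][v]` centered at the center of `u`, is a
dialgebra. -/
theorem freeDialg_is_dialgebra (k X : Type*) [Field k] :
    (∀ u v : NDiword X,
        lmul (Finsupp.single u (1 : k)) (Finsupp.single v 1)
          = Finsupp.single (u.lconc v) 1) ∧
    (∀ u v : NDiword X,
        rmul (Finsupp.single u (1 : k)) (Finsupp.single v 1)
          = Finsupp.single (u.rconc v) 1) ∧
    (∀ f g h : FreeDialg k X, lmul (f + g) h = lmul f h + lmul g h) ∧
    (∀ f g h : FreeDialg k X, lmul f (g + h) = lmul f g + lmul f h) ∧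
    (∀ (r : k) (f g : FreeDialg k X), lmul (r • f) g = r • lmul f g) ∧
    (∀ (r : k) (f g : FreeDialg k X), lmul f (r • g) = r • lmul f g) ∧
    (∀ f g h : FreeDialg k X, rmul (f + g) h = rmul f h + rmul g h) ∧
    (∀ f g h : FreeDialg k X, rmul f (g + h) = rmul f g + rmul f h) ∧
    (∀ (r : k) (f g : FreeDialg k X), rmul (r • f) g = r • rmul f g) ∧
    (∀ (r : k) (f g : FreeDialg k X), rmul f (r • g) = r • rmul f g) ∧
    (∀ f g h : FreeDialg k X, lmul (lmul f g) h = lmul f (lmul g h)) ∧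
    (∀ f g h : FreeDialg k X, rmul (rmul f g) h = rmul f (rmul g h)) ∧
    (∀ f g h : FreeDialg k X, rmul f (lmul g h) = rmul (rmul f g) h) ∧
    (∀ f g h : FreeDialg k X, lmul (rmul f g) h = lmul f (lmul g h)) ∧
    (∀ f g h : FreeDialg k X, lmul f (rmul g h) = rmul (lmul f g) h) := by
  rw [lmul_eq_convolution, rmul_eq_convolution]
  refine ⟨fun u v => by rw [convolution_single_single, mul_one],
    fun u v => by rw [convolution_single_single, mul_one],
    add_convolution _, convolution_add _, smul_convolution _, convolution_smul _,
    add_convolution _, convolution_add _, smul_convolution _, convolution_smul _,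
    convolution_convolution NDiword.lconc_assoc,
    convolution_convolution NDiword.rconc_assoc,
    fun f g h => (convolution_convolution NDiword.rconc_rconc_eq_rconc_lconc f g h).symm,
    convolution_convolution NDiword.rconc_lconc_eq_lconc_lconc,
    fun f g h => (convolution_convolution NDiword.lconc_rconc_assoc f g h).symm⟩
end

section
/- Let X be a well-ordered set, D(X) the free dialgebra over a field k with the deg-lex order, and S ⊆ D(X) a set of monic polynomials. Assume that every composition of left multiplication x ⊣ f (f ∈ S not right normed, x ∈ X) and every composition of right multiplication f ⊢ x (f ∈ S not left normed, x ∈ X) is trivial modulo S. Then every s-diword [asb] with s ∈ S can be written as a linear combination Σᵢ αᵢ [aᵢsᵢbᵢ] where each sᵢ ∈ S and each [aᵢsᵢbᵢ] is a normal sᵢ-diword. -/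
universe u v

/-! An `s`-diword `[asb]` is the image of `s` under the map `u ↦ [aub]` on normal diwords, and
these maps compose: substituting a context into another one gives a context, normal for `t` as
soon as both are. With `x` the first letter of `[w]`, the diword `a ⊢ s ⊢ [w]` is the image of
`s ⊢ x` under a context that is normal for every left normed `t`; by hypothesis `s ⊢ x` is a
combination of normal `sᵢ`-diwords with `sᵢ` left normed, and applying the context keeps them
normal. The case `[w] ⊣ s ⊣ b` is symmetric, with `x` the last letter of `[w]`. -/

section MultiplicationCompositions

variable {k : Type*} [Field k] {X : Type*}

open Finsupp

lemma lmul_single_one_left (w : NDiword X) (f : FreeDialg k X) :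
    lmul (single w 1) f = mapDomain w.lconc f := by
  rw [lmul, sum_single_index (by simp)]
  simp only [one_mul, mapDomain]

lemma rmul_single_one_left (w : NDiword X) (f : FreeDialg k X) :
    rmul (single w 1) f = mapDomain w.rconc f := by
  rw [rmul, sum_single_index (by simp)]
  simp only [one_mul, mapDomain]

lemma lmul_single_one_right (f : FreeDialg k X) (w : NDiword X) :
    lmul f (single w 1) = mapDomain (·.lconc w) f := by
  simp only [lmul, sum_single_index, mul_one, mul_zero, single_zero, mapDomain]

lemma rmul_single_one_right (f : FreeDialg k X) (w : NDiword X) :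
    rmul f (single w 1) = mapDomain (·.rconc w) f := by
  simp only [rmul, sum_single_index, mul_one, mul_zero, single_zero, mapDomain]

lemma lfold_eq_mapDomain (a : List X) (f : FreeDialg k X) :
    lfold a f = mapDomain (fun u : NDiword X => ⟨a ++ u.left, u.center, u.right⟩) f := by
  induction a with
  | nil => exact mapDomain_id.symm
  | cons x a ih =>
    rw [lfold, List.foldr_cons, ← lfold, ih, ofX, lmul_single_one_left, ← mapDomain_comp]
    rfl

lemma rfold_eq_mapDomain (f : FreeDialg k X) (b : List X) :
    rfold f b = mapDomain (fun u : NDiword X => ⟨u.left, u.center, u.right ++ b⟩) f := by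
  induction b generalizing f with
  | nil =>
    simp only [rfold, List.foldl_nil, List.append_nil]
    exact mapDomain_id.symm
  | cons y b ih =>
    rw [rfold, List.foldl_cons, ← rfold, ih, ofX, rmul_single_one_right, ← mapDomain_comp]
    congr 1
    funext u
    simp [NDiword.rconc, NDiword.word]

namespace Ctx

lemma eval_eq_mapDomain (c : Ctx X) (t : FreeDialg k X) :
    c.eval t = mapDomain (c.subst ·) t := by
  cases c with
  | center a b =>
    rw [eval, rfold_eq_mapDomain, lfold_eq_mapDomain, ← mapDomain_comp]
    rfl
  | left a w =>
    rw [eval, lmul_single_one_right, lfold_eq_mapDomain, ← mapDomain_comp]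
    congr 1
    funext u
    simp [NDiword.lconc, subst]
  | right w b =>
    rw [eval, rmul_single_one_left, rfold_eq_mapDomain, ← mapDomain_comp]
    rfl

def wordBefore : Ctx X → List X
  | center a _ => a
  | left a _ => a
  | right w _ => w.word

def wordAfter : Ctx X → List X
  | center _ b => b
  | left _ w => w.word
  | right _ b => b

lemma word_subst (c : Ctx X) (u : NDiword X) :
    (c.subst u).word = c.wordBefore ++ u.word ++ c.wordAfter := by
  cases c <;> simp [subst, wordBefore, wordAfter, NDiword.word]

def comp : Ctx X → Ctx X → Ctx X
  | center a b, center a' b' => center (a ++ a') (b' ++ b)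
  | center a b, left a' w => left (a ++ a') ⟨w.left, w.center, w.right ++ b⟩
  | center a b, right w b' => right ⟨a ++ w.left, w.center, w.right⟩ (b' ++ b)
  | left a w, c => left (a ++ c.wordBefore) ⟨c.wordAfter ++ w.left, w.center, w.right⟩
  | right w b, c => right ⟨w.left, w.center, w.right ++ c.wordBefore⟩ (c.wordAfter ++ b)

lemma subst_comp (d c : Ctx X) (u : NDiword X) :
    (d.comp c).subst u = d.subst (c.subst u) := by
  cases d with
  | center => cases c <;> simp [comp, subst, NDiword.word]
  | left | right => simp [comp, subst.eq_2, subst.eq_3, word_subst]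

lemma eval_comp (d c : Ctx X) (t : FreeDialg k X) :
    (d.comp c).eval t = mapDomain d.subst (c.eval t) := by
  rw [eval_eq_mapDomain, eval_eq_mapDomain, ← mapDomain_comp]
  congr 1
  funext u
  exact subst_comp d c u

lemma eval_eq_mapDomain_lconc {c d : Ctx X} {x : X}
    (h : ∀ u, d.subst (u.lconc ⟨[], x, []⟩) = c.subst u) (t : FreeDialg k X) :
    c.eval t = mapDomain d.subst (lmul t (ofX k x)) := by
  rw [eval_eq_mapDomain, ofX, lmul_single_one_right, ← mapDomain_comp]
  exact congrArg (mapDomain · t) (funext fun u => (h u).symm)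

lemma eval_eq_mapDomain_rconc {c d : Ctx X} {x : X}
    (h : ∀ u, d.subst (NDiword.rconc ⟨[], x, []⟩ u) = c.subst u) (t : FreeDialg k X) :
    c.eval t = mapDomain d.subst (rmul (ofX k x) t) := by
  rw [eval_eq_mapDomain, ofX, rmul_single_one_left, ← mapDomain_comp]
  exact congrArg (mapDomain · t) (funext fun u => (h u).symm)

lemma exists_subst_lconc_eq_subst_left (a : List X) (w : NDiword X) :
    ∃ (x : X) (d : Ctx X), (∀ t : FreeDialg k X, LeftNormed t → IsNormalFor t d) ∧
      ∀ u, d.subst (u.lconc ⟨[], x, []⟩) = (left a w).subst u := by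
  obtain ⟨_ | ⟨x, l⟩, wc, wr⟩ := w
  · exact ⟨wc, center a wr, fun _ _ => trivial, fun u => by simp [subst, NDiword.lconc]⟩
  · exact ⟨x, left a ⟨l, wc, wr⟩, fun _ ht => ht,
      fun u => by simp [subst, NDiword.lconc, NDiword.word]⟩

lemma exists_subst_rconc_eq_subst_right (w : NDiword X) (b : List X) :
    ∃ (x : X) (d : Ctx X), (∀ t : FreeDialg k X, RightNormed t → IsNormalFor t d) ∧
      ∀ u, d.subst (NDiword.rconc ⟨[], x, []⟩ u) = (right w b).subst u := by
  obtain ⟨wl, wc, wr⟩ := w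
  rcases List.eq_nil_or_concat wr with rfl | ⟨r, x, rfl⟩
  · exact ⟨wc, center wl b, fun _ _ => trivial,
      fun u => by simp [subst, NDiword.rconc, NDiword.word]⟩
  · exact ⟨x, right ⟨wl, wc, r⟩ b, fun _ ht => ht,
      fun u => by simp [subst, NDiword.rconc, NDiword.word]⟩

end Ctx

lemma IsNormalFor.comp {t : FreeDialg k X} {d c : Ctx X} (hd : IsNormalFor t d)
    (hc : IsNormalFor t c) : IsNormalFor t (d.comp c) := by
  cases d <;> cases c <;> first | exact hc | exact hd

lemma IsCombination.of_mem {S : Set (FreeDialg k X)} {P : FreeDialg k X → Ctx X → Prop}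
    {s : FreeDialg k X} {c : Ctx X} (hs : s ∈ S) (hP : P s c) : IsCombination S (c.eval s) P :=
  ⟨1, fun _ => 1, fun _ => s, fun _ => c, fun _ => hs, fun _ => hP, by simp⟩

lemma IsCombination.mapDomain_subst {S : Set (FreeDialg k X)} {h : FreeDialg k X}
    {P Q : FreeDialg k X → Ctx X → Prop} (d : Ctx X) (hPQ : ∀ t c, P t c → Q t (d.comp c))
    (hh : IsCombination S h P) : IsCombination S (mapDomain d.subst h) Q := by
  obtain ⟨n, α, s, c, hS, hP, rfl⟩ := hh
  refine ⟨n, α, s, fun i => d.comp (c i), hS, fun i => hPQ _ _ (hP i), ?_⟩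
  simp only [mapDomain_finsetSum, mapDomain_smul, Ctx.eval_comp]

end MultiplicationCompositions

theorem s_diword_eq_combination_of_normal_general {k X : Type*} [Field k] [LinearOrder X]
    (S : Set (FreeDialg k X))
    (hl : LMulCompsTrivial S) (hr : RMulCompsTrivial S)
    (s : FreeDialg k X) (hs : s ∈ S) (c : Ctx X) :
    IsCombination S (c.eval s) fun t c' => IsNormalFor t c' := by
  cases c with
  | center a b => exact .of_mem hs trivial
  | left a w =>
    by_cases hs_left : LeftNormed s
    · exact .of_mem hs hs_left
    obtain ⟨x, d, hd, hsubst⟩ := Ctx.exists_subst_lconc_eq_subst_left (k := k) a w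
    rw [Ctx.eval_eq_mapDomain_lconc hsubst]
    exact (hr s hs hs_left x).mapDomain_subst d fun t c ⟨hc, ht, _⟩ => (hd t ht).comp hc
  | right w b =>
    by_cases hs_right : RightNormed s
    · exact .of_mem hs hs_right
    obtain ⟨x, d, hd, hsubst⟩ := Ctx.exists_subst_rconc_eq_subst_right (k := k) w b
    rw [Ctx.eval_eq_mapDomain_rconc hsubst]
    exact (hl s hs hs_right x).mapDomain_subst d fun t c ⟨hc, ht, _⟩ => (hd t ht).comp hc

/-- Lemma on multiplication compositions: if every composition of
left and right multiplication of elements of the monic set `S` is trivial modulo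
`S`, then every `s`-diword `[asb]` with `s ∈ S` is a linear combination of normal
`S`-diwords. -/
theorem s_diword_eq_combination_of_normal {k X : Type*} [Field k] [LinearOrder X]
    [WellFoundedLT X] (S : Set (FreeDialg k X)) (hmonic : ∀ f ∈ S, Monic f)
    (hl : LMulCompsTrivial S) (hr : RMulCompsTrivial S)
    (s : FreeDialg k X) (hs : s ∈ S) (c : Ctx X) :
    IsCombination S (c.eval s) fun t c' => IsNormalFor t c' :=
  s_diword_eq_combination_of_normal_general S hl hr s hs c
end
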